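/- For every i ∈ F_q, the identity (Σ_{x ∈ X_i} x) · (Σ_{x ∈ X_i} x⁻¹) = q²·e + q·(Σ_{g ∈ G} g − Σ_{z ∈ Z} z) holds in the integral group ring ℤ[G]. Equivalently: for every g ∈ G \ Z the number of pairs (u,v) ∈ X_i × X_i with uv⁻¹ = g equals q, for every g ∈ Z \ {e} this number equals 0, and for g = e it equals q². That is, X_i is a divisible difference set with parameters (q², q, q², 0, q) which is a transversal for Z in G. -/

import Mathlib

/-- The Heisenberg group `H₃(F)` of upper unitriangular 3×3 matrices over `F`,
recorded by the three free entries: `x` in position (1,2), `y` in position (2,3),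
`z` in position (1,3). -/
@[ext]
structure Heis (F : Type*) where
  x : F
  y : F
  z : F
deriving DecidableEq

namespace Heis

variable {F : Type*} [Field F]

/-- Multiplication corresponding to the matrix product. -/
instance : Group (Heis F) where
  mul a b := ⟨a.x + b.x, a.y + b.y, a.z + b.z + a.x * b.y⟩
  one := ⟨0, 0, 0⟩
  inv a := ⟨-a.x, -a.y, -a.z + a.x * a.y⟩
  mul_assoc a b c := Heis.ext
    (show a.x + b.x + c.x = a.x + (b.x + c.x) by ring)
    (show a.y + b.y + c.y = a.y + (b.y + c.y) by ring)
    (show a.z + b.z + a.x * b.y + c.z + (a.x + b.x) * c.y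
        = a.z + (b.z + c.z + b.x * c.y) + a.x * (b.y + c.y) by ring)
  one_mul a := Heis.ext
    (show (0 : F) + a.x = a.x by ring)
    (show (0 : F) + a.y = a.y by ring)
    (show (0 : F) + a.z + 0 * a.y = a.z by ring)
  mul_one a := Heis.ext
    (show a.x + 0 = a.x by ring)
    (show a.y + 0 = a.y by ring)
    (show a.z + 0 + a.x * 0 = a.z by ring)
  inv_mul_cancel a := Heis.ext
    (show -a.x + a.x = 0 by ring)
    (show -a.y + a.y = 0 by ring)
    (show -a.z + a.x * a.y + a.z + -a.x * a.y = 0 by ring)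

instance [Fintype F] : Fintype (Heis F) :=
  Fintype.ofEquiv (F × F × F)
    ⟨fun p => ⟨p.1, p.2.1, p.2.2⟩, fun a => (a.x, a.y, a.z), fun _ => rfl, fun _ => rfl⟩

end Heis

/-- The element `g(x,y,z)` of the Heisenberg group. -/
def gElt {F : Type*} (x y z : F) : Heis F := ⟨x, y, z⟩

/-- The center `Z = {g(0,0,z) : z ∈ F}` of the Heisenberg group, as a set. -/
def Zset (F : Type*) [Field F] : Set (Heis F) := {g : Heis F | g.x = 0 ∧ g.y = 0}

/-- The center `Z` as a subgroup of the Heisenberg group. -/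
def Zsub (F : Type*) [Field F] : Subgroup (Heis F) where
  carrier := Zset F
  mul_mem' := fun {a b} ha hb =>
    ⟨show a.x + b.x = 0 by rw [ha.1, hb.1, add_zero],
     show a.y + b.y = 0 by rw [ha.2, hb.2, add_zero]⟩
  one_mem' := ⟨rfl, rfl⟩
  inv_mem' := fun {a} ha =>
    ⟨show -a.x = 0 by rw [ha.1, neg_zero],
     show -a.y = 0 by rw [ha.2, neg_zero]⟩

/-- `γ_i(α,β) = αβ/2 + (α² − εβ²)i`. -/
def gam {F : Type*} [Field F] (ε i α β : F) : F := α * β / 2 + (α ^ 2 - ε * β ^ 2) * i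

/-- `Y_i = {g(α, β, γ_i(α,β)) : (α,β) ≠ (0,0)}`. -/
def Yset {F : Type*} [Field F] (ε i : F) : Set (Heis F) :=
  {g : Heis F | ∃ α β : F, (α, β) ≠ (0, 0) ∧ g = gElt α β (gam ε i α β)}

/-- `X_i = Y_i ∪ {e}`. -/
def Xset {F : Type*} [Field F] (ε i : F) : Set (Heis F) := Yset ε i ∪ {1}

/-- The map `ρ(M) : G → G` attached to the matrix `M = [[α,β],[εβ,α]]`. -/
def rho {F : Type*} [Field F] (ε α β : F) : Heis F → Heis F := fun g =>
  gElt (α * g.x + ε * β * g.y) (β * g.x + α * g.y)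
    (α * β * (g.x ^ 2 / 2 + ε * g.y ^ 2 / 2) + ε * β ^ 2 * g.x * g.y
      + (α ^ 2 - ε * β ^ 2) * g.z)

/-- `K = {ρ(M) : M = [[α,β],[εβ,α]], (α,β) ≠ (0,0)}`, as a set of maps `G → G`. -/
def Kset {F : Type*} [Field F] (ε : F) : Set (Heis F → Heis F) :=
  {f | ∃ α β : F, (α, β) ≠ (0, 0) ∧ f = rho ε α β}

/-- The family of sets `{e}`, `Z \ {e}`, `Y_i` for `i ∈ F`. -/
def SFam {F : Type*} [Field F] (ε : F) : Set (Set (Heis F)) :=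
  insert {1} (insert (Zset F \ {1}) {S | ∃ i : F, S = Yset ε i})

/-- `f` preserves each of the basic sets `{e}`, `Z \ {e}`, `Y_i`:
`hg⁻¹ ∈ S ↔ f(h)f(g)⁻¹ ∈ S`. -/
def Preserves {F : Type*} [Field F] (ε : F) (f : Heis F → Heis F) : Prop :=
  ∀ S ∈ SFam ε, ∀ g h : Heis F, h * g⁻¹ ∈ S ↔ f h * (f g)⁻¹ ∈ S

/-- The set of permutations of `G` of the form `x ↦ σ(x)·c` with `σ ∈ K`, `c ∈ G`. -/
def Aset {F : Type*} [Field F] (ε : F) : Set (Equiv.Perm (Heis F)) :=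
  {f | ∃ σ ∈ Kset ε, ∃ c : Heis F, ∀ x : Heis F, f x = σ x * c}

/-- The operation `ψ` on `F ∪ {∞}`, with `∞` encoded as `none`. -/
def psi {F : Type*} [Field F] [DecidableEq F] (ε : F) : Option F → Option F → Option F
  | none, j => j
  | some i, none => some i
  | some i, some j => if i + j = 0 then none else some ((i * j + ε / 16) / (i + j))

/-- `Y_k` for `k ∈ F ∪ {∞}`, where `Y_∞ = Z \ {e}`. -/
def YInf {F : Type*} [Field F] (ε : F) : Option F → Set (Heis F)
  | some i => Yset ε i
  | none => Zset F \ {1}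


/-!
`X_i` is the image of the injective map `φ(α, β) = g(α, β, γ_i(α, β))` on `F²` (with
`φ(0) = e`). For `d ∈ F²` one computes `φ(q + d) φ(q)⁻¹ = φ(d) · g(0, 0, ℓ_d(q))`, where `ℓ_d` is
a linear form in `q` which is nonzero for `d ≠ 0` because `2 ≠ 0` and `ε` is a nonsquare. Hence
the number of ways to write `g = g(a, b, c)` as `uv⁻¹` with `u, v ∈ X_i` is the number of
solutions of the affine equation `ℓ_(a,b)(q) = c - γ_i(a, b)`: `q` if `(a, b) ≠ 0`, `q²` if
`g = e`, and `0` for the other central elements. The group ring identity just collects these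
counts, and `φ(a, b)` is the unique element of `X_i` in the coset `gZ`.
-/

open Finset

section DifferenceCounts

open scoped Classical

variable {G : Type*} [Group G] [Fintype G]

theorem MonoidAlgebra.sum_of_mul_sum_of_inv (k : Type*) [CommSemiring k] (X : Set G) :
    (∑ x ∈ univ.filter (· ∈ X), MonoidAlgebra.of k G x) *
        (∑ x ∈ univ.filter (· ∈ X), MonoidAlgebra.of k G x⁻¹) =
      ∑ g : G, Nat.card {p : G × G // p.1 ∈ X ∧ p.2 ∈ X ∧ p.1 * p.2⁻¹ = g} •
        MonoidAlgebra.of k G g := by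
  set S := univ.filter (· ∈ X)
  have hcard (g : G) : Nat.card {p : G × G // p.1 ∈ X ∧ p.2 ∈ X ∧ p.1 * p.2⁻¹ = g} =
      #{p ∈ S ×ˢ S | p.1 * p.2⁻¹ = g} := by
    rw [Nat.card_eq_fintype_card, Fintype.card_subtype]
    congr 1
    ext p
    simp [S, and_assoc]
  simp only [hcard, ← sum_const, sum_mul_sum, ← map_mul, ← sum_product']
  exact (sum_fiberwise' (S ×ˢ S) (fun p => p.1 * p.2⁻¹) (MonoidAlgebra.of k G)).symm

end DifferenceCounts

theorem Fintype.sum_nsmul_of_three_values {α M : Type*} [Fintype α] [AddCommGroup M]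
    (Z : Set α) [DecidablePred (· ∈ Z)] {e : α} (he : e ∈ Z) (f : α → M) (c : α → ℕ) {a n : ℕ}
    (hce : c e = a) (hcZ : ∀ g ∈ Z, g ≠ e → c g = 0) (hcZc : ∀ g ∉ Z, c g = n) :
    ∑ g, c g • f g = a • f e + n • (∑ g, f g - ∑ g ∈ univ.filter (· ∈ Z), f g) := by
  rw [← sum_filter_add_sum_filter_not univ (· ∈ Z) (fun g => c g • f g),
    ← sum_filter_add_sum_filter_not univ (· ∈ Z) f, add_sub_cancel_left, smul_sum,
    sum_eq_single_of_mem e (by simpa using he) fun g hg hge => by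
      rw [hcZ g (mem_filter.mp hg).2 hge, zero_smul], hce]
  congr 1
  exact Finset.sum_congr rfl fun g hg => by rw [hcZc g (mem_filter.mp hg).2]

theorem FiniteField.two_ne_zero_of_odd_card {K : Type*} [Field K] [Fintype K]
    (h : Odd (Fintype.card K)) : (2 : K) ≠ 0 :=
  Ring.two_ne_zero fun hK => by
    have := FiniteField.even_card_of_char_two hK
    rw [Nat.odd_iff] at h
    omega

section LinearEquation

variable {K : Type*} [Field K]

theorem sq_mul_ne_one_of_not_isSquare {ε : K} (hε : ¬IsSquare ε) (c : K) : c ^ 2 * ε ≠ 1 := by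
  intro h
  have hc : c ≠ 0 := by rintro rfl; simp at h
  exact hε ⟨c⁻¹, by field_simp; linear_combination h⟩

theorem natCard_linear_eq {u v : K} (w : K) (h : (u, v) ≠ 0) :
    Nat.card {q : K × K // u * q.1 + v * q.2 = w} = Nat.card K := by
  by_cases hu : u = 0
  · subst hu
    have hv : v ≠ 0 := fun hv => h (by simp [hv])
    exact Nat.card_congr
      { toFun := fun q => q.1.1
        invFun := fun t => ⟨(t, w / v), by field_simp; ring⟩
        left_inv := fun q => Subtype.ext <| Prod.ext rfl <| by
          dsimp only
          rw [div_eq_iff hv]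
          linear_combination -q.2
        right_inv := fun _ => rfl }
  · exact Nat.card_congr
      { toFun := fun q => q.1.2
        invFun := fun t => ⟨((w - v * t) / u, t), by field_simp; ring⟩
        left_inv := fun q => Subtype.ext <| Prod.ext (by
          dsimp only
          rw [div_eq_iff hu]
          linear_combination -q.2) rfl
        right_inv := fun _ => rfl }

end LinearEquation

namespace Heis

variable {F : Type*} [Field F]

theorem mul_def (a b : Heis F) :
    a * b = ⟨a.x + b.x, a.y + b.y, a.z + b.z + a.x * b.y⟩ := rfl

theorem inv_def (a : Heis F) : a⁻¹ = ⟨-a.x, -a.y, -a.z + a.x * a.y⟩ := rfl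

theorem one_def : (1 : Heis F) = ⟨0, 0, 0⟩ := rfl

theorem mul_inv_mem_Zset_iff (a b : Heis F) : a * b⁻¹ ∈ Zset F ↔ a.x = b.x ∧ a.y = b.y := by
  simp only [Zset, Set.mem_ofPred_eq, mul_def, inv_def, ← sub_eq_add_neg, sub_eq_zero]

def param (ε i : F) (p : F × F) : Heis F := gElt p.1 p.2 (gam ε i p.1 p.2)

theorem param_injective (ε i : F) : Function.Injective (param ε i) :=
  fun _ _ h => Prod.ext (congrArg Heis.x h) (congrArg Heis.y h)

theorem param_zero (ε i : F) : param ε i 0 = 1 :=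
  Heis.ext rfl rfl (by simp [param, gElt, gam, one_def])

theorem range_param (ε i : F) : Set.range (param ε i) = Xset ε i := by
  ext g
  constructor
  · rintro ⟨p, rfl⟩
    by_cases hp : p = 0
    · exact Or.inr (hp ▸ param_zero ε i)
    · exact Or.inl ⟨p.1, p.2, hp, rfl⟩
  · rintro (⟨α, β, -, rfl⟩ | rfl)
    · exact ⟨(α, β), rfl⟩
    · exact ⟨0, param_zero ε i⟩

theorem existsUnique_mem_Xset_mul_inv_mem_Zset (ε i : F) (g : Heis F) :
    ∃! x, x ∈ Xset ε i ∧ x * g⁻¹ ∈ Zset F := by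
  rw [← range_param]
  refine ⟨param ε i (g.x, g.y), ⟨⟨_, rfl⟩, (mul_inv_mem_Zset_iff _ _).2 ⟨rfl, rfl⟩⟩, ?_⟩
  rintro _ ⟨⟨p, rfl⟩, hp⟩
  exact congrArg _ (Prod.ext_iff.2 ((mul_inv_mem_Zset_iff _ _).1 hp))

theorem param_mul_inv_param_eq_iff (h2 : (2 : F) ≠ 0) (ε i : F) (g : Heis F) (p q : F × F) :
    param ε i p * (param ε i q)⁻¹ = g ↔ p = q + (g.x, g.y) ∧
      (g.y / 2 + 2 * i * g.x) * q.1 + -(g.x / 2 + 2 * i * ε * g.y) * q.2 =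
        g.z - gam ε i g.x g.y := by
  obtain ⟨a, b, c⟩ := g
  obtain ⟨p₁, p₂⟩ := p
  obtain ⟨q₁, q₂⟩ := q
  simp only [param, gElt, gam, mul_def, inv_def, Heis.mk.injEq, Prod.mk_add_mk, Prod.mk.injEq]
  constructor
  · rintro ⟨hx, hy, hz⟩
    obtain rfl : p₁ = q₁ + a := by linear_combination hx
    obtain rfl : p₂ = q₂ + b := by linear_combination hy
    exact ⟨⟨rfl, rfl⟩, by linear_combination hz - a * q₂ * inv_mul_cancel₀ h2⟩
  · rintro ⟨⟨rfl, rfl⟩, h⟩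
    exact ⟨by ring, by ring, by linear_combination h + a * q₂ * inv_mul_cancel₀ h2⟩

/- The coefficient matrix `[[2i, 1/2], [-1/2, -2iε]]` of `d ↦ ℓ_d` has determinant
`1/4 - 4εi²`, which vanishes only if `ε = (4i)⁻²`. -/
theorem coeffs_ne_zero (h2 : (2 : F) ≠ 0) {ε : F} (hε : ¬IsSquare ε) (i : F) {a b : F}
    (hab : (a, b) ≠ 0) : (b / 2 + 2 * i * a, -(a / 2 + 2 * i * ε * b)) ≠ 0 := by
  intro h
  simp only [Ne, Prod.mk_eq_zero, neg_eq_zero] at h hab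
  obtain ⟨hu, hv⟩ := h
  field_simp at hu hv
  have ha : a * (1 - (4 * i) ^ 2 * ε) = 0 := by linear_combination hv - 4 * i * ε * hu
  obtain rfl : a = 0 :=
    (mul_eq_zero.1 ha).resolve_right (sub_ne_zero.2 (sq_mul_ne_one_of_not_isSquare hε _).symm)
  exact hab ⟨rfl, by linear_combination hu⟩

theorem natCard_Xset_pairs (h2 : (2 : F) ≠ 0) (ε i : F) (g : Heis F) :
    Nat.card {p : Heis F × Heis F // p.1 ∈ Xset ε i ∧ p.2 ∈ Xset ε i ∧ p.1 * p.2⁻¹ = g} =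
      Nat.card {q : F × F // (g.y / 2 + 2 * i * g.x) * q.1 + -(g.x / 2 + 2 * i * ε * g.y) * q.2 =
        g.z - gam ε i g.x g.y} := by
  have hiff := param_mul_inv_param_eq_iff h2 ε i g
  rw [← range_param]
  refine (Nat.card_congr (Equiv.ofBijective
    (fun q => ⟨(param ε i (q.1 + (g.x, g.y)), param ε i q.1), ⟨_, rfl⟩, ⟨_, rfl⟩,
      (hiff _ _).2 ⟨rfl, q.2⟩⟩) ⟨fun q q' h => ?_, ?_⟩)).symm
  · exact Subtype.ext (param_injective ε i (congrArg (·.1.2) h))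
  · rintro ⟨⟨x, y⟩, hx, hy, hpq⟩
    obtain ⟨p, rfl⟩ : x ∈ Set.range (param ε i) := hx
    obtain ⟨q, rfl⟩ : y ∈ Set.range (param ε i) := hy
    obtain ⟨rfl, hq⟩ := (hiff p q).1 hpq
    exact ⟨⟨q, hq⟩, rfl⟩

variable [Fintype F]

theorem natCard_Xset_pairs_of_not_mem_Zset (h2 : (2 : F) ≠ 0) {ε : F} (hε : ¬IsSquare ε)
    (i : F) {g : Heis F} (hg : g ∉ Zset F) :
    Nat.card {p : Heis F × Heis F // p.1 ∈ Xset ε i ∧ p.2 ∈ Xset ε i ∧ p.1 * p.2⁻¹ = g} =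
      Fintype.card F := by
  have hxy : (g.x, g.y) ≠ 0 := fun h => hg (Prod.mk_eq_zero.1 h)
  rw [natCard_Xset_pairs h2, natCard_linear_eq _ (coeffs_ne_zero h2 hε i hxy),
    Nat.card_eq_fintype_card]

theorem natCard_Xset_pairs_one (h2 : (2 : F) ≠ 0) (ε i : F) :
    Nat.card {p : Heis F × Heis F // p.1 ∈ Xset ε i ∧ p.2 ∈ Xset ε i ∧ p.1 * p.2⁻¹ = 1} =
      Fintype.card F ^ 2 := by
  rw [natCard_Xset_pairs h2, one_def]
  simp [gam, sq]

theorem natCard_Xset_pairs_of_mem_Zset_of_ne_one (h2 : (2 : F) ≠ 0) (ε i : F) {g : Heis F}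
    (hg : g ∈ Zset F) (hg1 : g ≠ 1) :
    Nat.card {p : Heis F × Heis F // p.1 ∈ Xset ε i ∧ p.2 ∈ Xset ε i ∧ p.1 * p.2⁻¹ = g} = 0 := by
  obtain ⟨a, b, c⟩ := g
  obtain ⟨rfl, rfl⟩ : a = 0 ∧ b = 0 := hg
  have hc : c ≠ 0 := by rintro rfl; exact hg1 rfl
  rw [natCard_Xset_pairs h2]
  simp [gam, hc.symm]

end Heis

open scoped Classical in
/-- For every `i ∈ F_q`, the identity
`(Σ_{x ∈ X_i} x)·(Σ_{x ∈ X_i} x⁻¹) = q²·e + q·(Σ_G − Σ_Z)` holds in `ℤ[G]`; equivalently,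
for `g ∉ Z` the number of pairs `(u,v) ∈ X_i × X_i` with `uv⁻¹ = g` is `q`, for
`g ∈ Z \ {e}` it is `0`, and for `g = e` it is `q²`; that is, `X_i` is a divisible
difference set with parameters `(q², q, q², 0, q)` which is a transversal for `Z` in `G`. -/
theorem statement_3 {F : Type*} [Field F] [Fintype F]
    (hodd : Odd (Fintype.card F)) (ε : F) (hε : ¬IsSquare ε) (i : F) :
    (∑ x ∈ Finset.univ.filter (fun x : Heis F => x ∈ Xset ε i),
        MonoidAlgebra.of ℤ (Heis F) x) *
      (∑ x ∈ Finset.univ.filter (fun x : Heis F => x ∈ Xset ε i),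
        MonoidAlgebra.of ℤ (Heis F) x⁻¹) =
      (Fintype.card F ^ 2) • MonoidAlgebra.of ℤ (Heis F) 1 +
      (Fintype.card F) •
        ((∑ g : Heis F, MonoidAlgebra.of ℤ (Heis F) g) -
          ∑ z ∈ Finset.univ.filter (fun z : Heis F => z ∈ Zset F),
            MonoidAlgebra.of ℤ (Heis F) z) ∧
    (∀ g : Heis F, g ∉ Zset F →
      Nat.card {p : Heis F × Heis F // p.1 ∈ Xset ε i ∧ p.2 ∈ Xset ε i ∧ p.1 * p.2⁻¹ = g}
        = Fintype.card F) ∧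
    (∀ g ∈ Zset F \ {1},
      Nat.card {p : Heis F × Heis F // p.1 ∈ Xset ε i ∧ p.2 ∈ Xset ε i ∧ p.1 * p.2⁻¹ = g}
        = 0) ∧
    Nat.card {p : Heis F × Heis F // p.1 ∈ Xset ε i ∧ p.2 ∈ Xset ε i ∧ p.1 * p.2⁻¹ = 1}
      = Fintype.card F ^ 2 ∧
    (∀ g : Heis F, ∃! x : Heis F, x ∈ Xset ε i ∧ x * g⁻¹ ∈ Zset F) := by
  have h2 := FiniteField.two_ne_zero_of_odd_card hodd
  have hnotZ (g : Heis F) (hg : g ∉ Zset F) :=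
    Heis.natCard_Xset_pairs_of_not_mem_Zset h2 hε i hg
  have hZ (g : Heis F) (hg : g ∈ Zset F \ {1}) :=
    Heis.natCard_Xset_pairs_of_mem_Zset_of_ne_one h2 ε i hg.1 hg.2
  have hone := Heis.natCard_Xset_pairs_one h2 ε i
  refine ⟨?_, hnotZ, hZ, hone, Heis.existsUnique_mem_Xset_mul_inv_mem_Zset ε i⟩
  rw [MonoidAlgebra.sum_of_mul_sum_of_inv]
  exact Fintype.sum_nsmul_of_three_values (Zset F) ⟨rfl, rfl⟩ _ _ hone
    (fun g hg hg1 => hZ g ⟨hg, hg1⟩) hnotZ
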